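/- For θ ∈ ℝ define X_θ : ℝ² → ℝ⁴ by X_θ(u, v) := cos θ · (sinh u · sin u, sinh u · cos u, cosh u · sinh v, cosh u · cosh v) + sin θ · (−cos u · cos v, sin u · cos v, cosh v · sin v, sinh v · sin v). Then for all (u, v) ∈ ℝ², ⟨X_θ(u, v), X_θ(u, v)⟩ = −cos(2θ), where ⟨·,·⟩ is the Lorentz bilinear form on ℝ⁴. In particular, the surface parametrized by X_θ lies in the hypersurface {x ∈ ℝ⁴ : x₁² + x₂² + x₃² − x₄² = −cos(2θ)} of Lorentz–Minkowski space; for θ = 0 it lies in the hyperbolic space ℍ³ = {⟨x, x⟩ = −1}, and for θ = π/2 in the de Sitter space 𝕊³₁ = {⟨x, x⟩ = 1}. -/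
import Mathlib


/-- The Lorentz bilinear form on ℝ⁴ (Lorentz–Minkowski space 𝕃⁴). -/
def lorR (x y : Fin 4 → ℝ) : ℝ := x 0 * y 0 + x 1 * y 1 + x 2 * y 2 - x 3 * y 3

/-- The family `X_θ` of marginally trapped surfaces lies in the hypersurface
`⟨x, x⟩ = -cos 2θ`; for `θ = 0` in ℍ³, for `θ = π/2` in 𝕊³₁. -/
theorem stmt_15 (X : ℝ → ℝ → ℝ → Fin 4 → ℝ)
    (hX : ∀ θ u v, X θ u v = fun i =>
      Real.cos θ * ![Real.sinh u * Real.sin u, Real.sinh u * Real.cos u,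
        Real.cosh u * Real.sinh v, Real.cosh u * Real.cosh v] i
      + Real.sin θ * ![-(Real.cos u * Real.cos v), Real.sin u * Real.cos v,
        Real.cosh v * Real.sin v, Real.sinh v * Real.sin v] i) :
    (∀ θ u v, lorR (X θ u v) (X θ u v) = -Real.cos (2 * θ)) ∧
    (∀ u v, X 0 u v ∈ {x : Fin 4 → ℝ | lorR x x = -1}) ∧
    (∀ u v, X (Real.pi / 2) u v ∈ {x : Fin 4 → ℝ | lorR x x = 1}) := by
  have key : ∀ θ u v, lorR (X θ u v) (X θ u v) = -Real.cos (2 * θ) := by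
    intro θ u v
    rw [hX, lorR, Real.cos_two_mul]
    simp only [Matrix.cons_val_zero, Matrix.cons_val_one, Matrix.head_cons,
      Matrix.cons_val_two, Matrix.tail_cons, Matrix.cons_val_three]
    have h1 := Real.sin_sq_add_cos_sq u
    have h2 := Real.sin_sq_add_cos_sq v
    have h3 := Real.sin_sq_add_cos_sq θ
    have h4 := Real.cosh_sq_sub_sinh_sq u
    have h5 := Real.cosh_sq_sub_sinh_sq v
    linear_combination Real.cos θ ^ 2 * Real.sinh u ^ 2 * h1
      - Real.cos θ ^ 2 * Real.cosh u ^ 2 * h5 - Real.cos θ ^ 2 * h4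
      + Real.sin θ ^ 2 * Real.cos v ^ 2 * h1 + Real.sin θ ^ 2 * Real.sin v ^ 2 * h5
      + Real.sin θ ^ 2 * h2 + h3
  refine ⟨key, fun u v => ?_, fun u v => ?_⟩
  · have := key 0 u v; simpa using this
  · have := key (Real.pi / 2) u v
    simp only [Set.mem_setOf_eq, this]
    rw [show 2 * (Real.pi / 2) = Real.pi by ring, Real.cos_pi]
    norm_num
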